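/- arXiv:2401.07821 — 3 statements merged into one kernel-verified Lean document; each statement's English description precedes it below -/
import Mathlib

section
/- Every type II homomorphism Φ : G_α → G_β (i.e. one with Φ(ℤ^m) ⊄ ℤ^{m'}) is neither injective nor surjective. -/
open Matrix SemidirectProduct

/-- The free abelian group `ℤ^m`, written multiplicatively. -/
abbrev FA (m : ℕ) : Type := Multiplicative (Fin m → ℤ)

/-- The (right) action of `GL_m(ℤ)` on `ℤ^m` (row vectors), as a homomorphism into
`MulAut (ℤ^m)`: the automorphism attached to `M` sends `a` to `a · M⁻¹`, so that in the
semidirect product below one gets the relation `u⁻¹ tᵃ u = t^(a·A_u)`. -/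
def rowAction (m : ℕ) :
    Matrix.GeneralLinearGroup (Fin m) ℤ →* MulAut (FA m) where
  toFun M :=
  { toFun := fun a => Multiplicative.ofAdd
      (Matrix.vecMul (Multiplicative.toAdd a)
        ((↑(M⁻¹) : Matrix (Fin m) (Fin m) ℤ)))
    invFun := fun a => Multiplicative.ofAdd
      (Matrix.vecMul (Multiplicative.toAdd a) ((↑M : Matrix (Fin m) (Fin m) ℤ)))
    left_inv := by
      intro a
      simp [Matrix.vecMul_vecMul]
    right_inv := by
      intro a
      simp [Matrix.vecMul_vecMul]
    map_mul' := by
      intro a b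
      simp [Matrix.add_vecMul] }
  map_one' := by
    ext a
    simp
  map_mul' := by
    intro M N
    ext a
    simp [Matrix.vecMul_vecMul, _root_.mul_inv_rev]

/-- The free-abelian by free group `G_α = F_n ⋉_α ℤ^m` associated to
`α : F_n → GL_m(ℤ)`; it satisfies `u⁻¹ tᵃ u = t^(a·A_u)`. -/
abbrev Gsd {n m : ℕ} (α : FreeGroup (Fin n) →* Matrix.GeneralLinearGroup (Fin m) ℤ) :
    Type :=
  FA m ⋊[(rowAction m).comp α] FreeGroup (Fin n)

/-- `tA α a` is the element `tᵃ` of the abelian part of `G_α`. -/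
def tA {n m : ℕ} (α : FreeGroup (Fin n) →* Matrix.GeneralLinearGroup (Fin m) ℤ)
    (a : Fin m → ℤ) : Gsd α :=
  SemidirectProduct.inl (Multiplicative.ofAdd a)

/-- `fE α u` is the element `u` of the free part of `G_α`. -/
def fE {n m : ℕ} (α : FreeGroup (Fin n) →* Matrix.GeneralLinearGroup (Fin m) ℤ)
    (u : FreeGroup (Fin n)) : Gsd α :=
  SemidirectProduct.inr u

/-- The projection `τ : G_α → ℤ^m`, reading off the abelian part of the normal form
`g = u · tᵃ` (i.e. `τ (fE α u * tA α a) = a`). -/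
def tau {n m : ℕ} (α : FreeGroup (Fin n) →* Matrix.GeneralLinearGroup (Fin m) ℤ)
    (g : Gsd α) : Fin m → ℤ :=
  Matrix.vecMul (Multiplicative.toAdd (SemidirectProduct.left g))
    ((↑(α (SemidirectProduct.right g)) : Matrix (Fin m) (Fin m) ℤ))

/-! If `Φ` is of type II, some `tᵃ` has nontrivial image `w` under `π' ∘ Φ`. Conjugates of `tᵃ`
commute with `tᵃ`, so every `v = π' (Φ g)` conjugates `w` into its centralizer. In a free group
the centralizer of `w ≠ 1` is infinite cyclic and commuting is transitive on nontrivial elements,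
so conjugation by `v` acts on that cyclic group by `±1` and `v²` centralizes `w`: all squares in
the image of `π' ∘ Φ` commute. Hence `π' ∘ Φ` misses `x₁` or `x₂`, and `Φ` kills the nontrivial
element `[[x₁², x₂²], [x₁², x₂⁴]]` of `F_n`, whose two inner commutators land in `ℤ^{m'}`. -/

open scoped commutatorElement
open Subgroup

namespace FreeGroup
variable {T : Type*}

section
variable [DecidableEq T]

-- `a ↦ (0 1 2)`, `b ↦ (2 3 4)`: a finite quotient in which the relations below visibly fail.
def threeCycleRep (a b : T) : FreeGroup T →* Equiv.Perm (Fin 5) :=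
  FreeGroup.lift fun t =>
    if t = a then Equiv.swap 0 1 * Equiv.swap 1 2
    else if t = b then Equiv.swap 2 3 * Equiv.swap 3 4 else 1

lemma threeCycleRep_of_left (a b : T) :
    threeCycleRep a b (of a) = Equiv.swap 0 1 * Equiv.swap 1 2 := by
  simp [threeCycleRep]

lemma threeCycleRep_of_right {a b : T} (hab : a ≠ b) :
    threeCycleRep a b (of b) = Equiv.swap 2 3 * Equiv.swap 3 4 := by
  simp [threeCycleRep, hab.symm]

def exponentSum (a : T) (x : FreeGroup T) : ℤ :=
  Multiplicative.toAdd (FreeGroup.lift (fun t => Multiplicative.ofAdd (if t = a then 1 else 0)) x)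

@[simp] lemma exponentSum_of (a t : T) : exponentSum a (of t) = if t = a then 1 else 0 := by
  simp [exponentSum]

@[simp] lemma exponentSum_zpow (a : T) (x : FreeGroup T) (k : ℤ) :
    exponentSum a (x ^ k) = k * exponentSum a x := by
  simp [exponentSum, toAdd_zpow]

end

theorem not_commute_sq_of_ne {a b : T} (hab : a ≠ b) :
    ¬ Commute (of a ^ 2) (of b ^ 2) := by
  classical
  intro h
  have := (h.map (threeCycleRep a b)).eq
  rw [_root_.map_pow, _root_.map_pow, threeCycleRep_of_left, threeCycleRep_of_right hab] at this
  revert this; decide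

set_option maxRecDepth 10000 in
theorem commutator_commutators_ne_one {a b : T} (hab : a ≠ b) :
    ⁅⁅of a ^ 2, of b ^ 2⁆, ⁅of a ^ 2, (of b ^ 2) ^ 2⁆⁆ ≠ 1 := by
  classical
  intro h
  have := congrArg (threeCycleRep a b) h
  simp only [map_commutatorElement, _root_.map_pow, _root_.map_one, threeCycleRep_of_left,
    threeCycleRep_of_right hab] at this
  revert this; decide

end FreeGroup

namespace IsFreeGroup
variable {G : Type*} [Group G] [IsFreeGroup G]

theorem isCyclic_of_subsingleton_generators [Subsingleton (Generators G)] : IsCyclic G := by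
  rw [MulEquiv.isCyclic (toFreeGroup G)]
  cases isEmpty_or_nonempty (Generators G) with
  | inl _ => infer_instance
  | inr h =>
    have := uniqueOfSubsingleton h.some
    infer_instance

instance isCyclic_of_isMulCommutative [IsMulCommutative G] : IsCyclic G := by
  have : Subsingleton (Generators G) := by
    refine ⟨fun a b => by_contra fun hab => FreeGroup.not_commute_sq_of_ne hab ?_⟩
    have : Commute ((toFreeGroup G).symm (.of a ^ 2)) ((toFreeGroup G).symm (.of b ^ 2)) :=
      mul_comm' _ _
    simpa using this.map (toFreeGroup G)
  exact isCyclic_of_subsingleton_generators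

theorem exists_mem_zpowers_of_commute {x y : G} (h : Commute x y) :
    ∃ d : G, x ∈ zpowers d ∧ y ∈ zpowers d := by
  have : IsMulCommutative (closure {x, y}) := isMulCommutative_closure <| by
    rintro _ (rfl | rfl) _ (rfl | rfl) <;> first | rfl | exact h.eq | exact h.symm.eq
  obtain ⟨d, hd⟩ := IsCyclic.exists_generator (α := closure {x, y})
  have key : ∀ z ∈ ({x, y} : Set G), z ∈ zpowers (d : G) := fun z hz => by
    obtain ⟨k, hk⟩ := mem_zpowers_iff.mp (hd ⟨z, subset_closure hz⟩)
    exact mem_zpowers_iff.mpr ⟨k, by simpa using congrArg Subtype.val hk⟩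
  exact ⟨d, key x (by simp), key y (by simp)⟩

end IsFreeGroup

theorem FreeGroup.eq_one_of_commute_of_commute {T : Type*} {a b : T} (hab : a ≠ b) {z : FreeGroup T}
    (ha : Commute z (of a)) (hb : Commute z (of b)) : z = 1 := by
  classical
  obtain ⟨d, ⟨i, rfl⟩, ⟨j, hj⟩⟩ := IsFreeGroup.exists_mem_zpowers_of_commute ha
  obtain ⟨e, ⟨i', hi'⟩, ⟨j', hj'⟩⟩ := IsFreeGroup.exists_mem_zpowers_of_commute hb
  have hda : j * exponentSum a d = 1 := by simpa using congrArg (exponentSum a) hj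
  have heb : j' * exponentSum b e = 1 := by simpa using congrArg (exponentSum b) hj'
  have hea : j' * exponentSum a e = 0 := by simpa [hab.symm] using congrArg (exponentSum a) hj'
  have he : exponentSum a e = 0 :=
    (mul_eq_zero.mp hea).resolve_left (left_ne_zero_of_mul_eq_one heb)
  have hz : i * exponentSum a d = 0 := by simpa [he] using congrArg (exponentSum a) hi'
  have hi : i = 0 := by linear_combination j * hz - i * hda
  simp [hi]

namespace IsFreeGroup
variable {G : Type*} [Group G] [IsFreeGroup G]

theorem isMulCommutative_centralizer {c : G} (hc : c ≠ 1) :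
    IsMulCommutative (centralizer {c}) := by
  set C := centralizer {c}
  suffices IsCyclic C from inferInstance
  have : Subsingleton (Generators C) := by
    refine ⟨fun a b => by_contra fun hab => hc ?_⟩
    have hcC : c ∈ C := mem_centralizer_singleton_iff.mpr rfl
    have hcentral : ∀ x, Commute (toFreeGroup C ⟨c, hcC⟩) x := fun x => by
      have : Commute (⟨c, hcC⟩ : C) ((toFreeGroup C).symm x) :=
        Subtype.ext (mem_centralizer_singleton_iff.mp ((toFreeGroup C).symm x).2).symm
      simpa using this.map (toFreeGroup C)
    have := FreeGroup.eq_one_of_commute_of_commute hab (hcentral _) (hcentral _)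
    simpa using congrArg Subtype.val ((toFreeGroup C).map_eq_one_iff.mp this)
  exact isCyclic_of_subsingleton_generators

theorem commute_trans {x c y : G} (hc : c ≠ 1) (hxc : Commute x c) (hcy : Commute c y) :
    Commute x y := by
  have := isMulCommutative_centralizer hc
  exact congrArg Subtype.val <| mul_comm'
    (⟨x, mem_centralizer_singleton_iff.mpr hxc.eq⟩ : centralizer {c})
    ⟨y, mem_centralizer_singleton_iff.mpr hcy.symm.eq⟩

instance : IsMulTorsionFree G :=
  Function.Injective.isMulTorsionFree (toFreeGroup G).toMonoidHom (toFreeGroup G).injective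

theorem commute_sq_of_commute_conj {v w : G} (hw : w ≠ 1) (h : Commute (v * w * v⁻¹) w) :
    Commute (v ^ 2) w := by
  have := isMulCommutative_centralizer hw
  obtain ⟨c, hc⟩ := IsCyclic.exists_generator (α := centralizer {w})
  obtain ⟨p, hp⟩ := mem_zpowers_iff.mp (hc ⟨w, mem_centralizer_singleton_iff.mpr rfl⟩)
  replace hp : (c : G) ^ p = w := by simpa using congrArg Subtype.val hp
  have hc1 : (c : G) ≠ 1 := fun h1 => hw (by rw [← hp, h1, _root_.one_zpow])
  have hconj : ∀ u : G, Commute (u * w * u⁻¹) w → ∃ k : ℤ, MulAut.conj u c = (c : G) ^ k := by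
    intro u hu
    have hwu : u * w * u⁻¹ ≠ 1 := by simpa using hw
    have hcw : Commute (c : G) w := mem_centralizer_singleton_iff.mp c.2
    have hcu : Commute (u * c * u⁻¹) w := commute_trans hwu (hcw.conj u) hu
    obtain ⟨k, hk⟩ := mem_zpowers_iff.mp (hc ⟨_, mem_centralizer_singleton_iff.mpr hcu.eq⟩)
    exact ⟨k, by simpa using (congrArg Subtype.val hk).symm⟩
  obtain ⟨k, hk⟩ := hconj v h
  obtain ⟨l, hl⟩ := hconj v⁻¹ (by
    have := h.conj v⁻¹
    rw [show v⁻¹ * (v * w * v⁻¹) * v⁻¹⁻¹ = w by group] at this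
    exact this.symm)
  have hlk : (c : G) ^ (l * k) = c ^ (1 : ℤ) := by
    calc (c : G) ^ (l * k) = MulAut.conj v⁻¹ (MulAut.conj v c) := by
          rw [hk, map_zpow, hl, _root_.zpow_mul]
      _ = c ^ (1 : ℤ) := by simp [mul_assoc]
  have hk2 : k * k = 1 := by
    have := injective_zpow_iff_not_isOfFinOrder.mpr (not_isOfFinOrder_of_isMulTorsionFree hc1) hlk
    rcases Int.eq_one_or_neg_one_of_mul_eq_one (mul_comm l k ▸ this) with rfl | rfl <;> rfl
  have hv2c : MulAut.conj (v ^ 2) c = c := by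
    rw [pow_two, map_mul, MulAut.mul_apply, hk, map_zpow, hk, ← _root_.zpow_mul, hk2, zpow_one]
  rw [← hp]
  exact Commute.zpow_right (mul_inv_eq_iff_eq_mul.mp hv2c) p

theorem commute_map_sq_of_map_ne_one {H : Type*} [Group H] (f : H →* G) {t : H} (ht : f t ≠ 1)
    (hconj : ∀ g, Commute (g * t * g⁻¹) t) (x y : H) :
    Commute (f x ^ 2) (f y ^ 2) := by
  have hsq : ∀ g, Commute (f g ^ 2) (f t) := fun g =>
    commute_sq_of_commute_conj ht (by simpa using (hconj g).map f)
  exact commute_trans ht (hsq x) (hsq y).symm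

end IsFreeGroup

namespace SemidirectProduct
variable {N K : Type*} [CommGroup N] [Group K] {φ : K →* MulAut N}

theorem commute_of_right_eq_one {x y : N ⋊[φ] K} (hx : x.right = 1) (hy : y.right = 1) :
    Commute x y := by
  ext <;> simp [hx, hy, mul_comm]

theorem eq_inl_of_right_eq_one {x : N ⋊[φ] K} (hx : x.right = 1) : x = inl x.left := by
  ext <;> simp [hx]

theorem not_injective_of_commute_sq {T : Type*} {a b : T} (hab : a ≠ b)
    (ψ : FreeGroup T →* N ⋊[φ] K) (hψ : ∀ x y, Commute ((ψ x).right ^ 2) ((ψ y).right ^ 2)) :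
    ¬ Function.Injective ψ := by
  intro hinj
  have hright : ∀ x y : FreeGroup T, (ψ ⁅x ^ 2, y ^ 2⁆).right = 1 := fun x y => by
    change rightHom (ψ _) = 1
    simp only [map_commutatorElement, _root_.map_pow, commutatorElement_eq_one_iff_commute]
    exact hψ x y
  apply FreeGroup.commutator_commutators_ne_one hab
  apply hinj
  rw [map_commutatorElement, _root_.map_one, commutatorElement_eq_one_iff_commute]
  exact commute_of_right_eq_one (hright _ _) (hright _ _)

end SemidirectProduct

theorem typeII_not_inj_not_surj_general {n m n' m' : ℕ} (hn : 2 ≤ n)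
    (hn' : 2 ≤ n')
    (α : FreeGroup (Fin n) →* Matrix.GeneralLinearGroup (Fin m) ℤ)
    (β : FreeGroup (Fin n') →* Matrix.GeneralLinearGroup (Fin m') ℤ)
    (Φ : Gsd α →* Gsd β)
    (hII : ¬ ∀ a : Fin m → ℤ, ∃ b : Fin m' → ℤ, Φ (tA α a) = tA β b) :
    ¬ Function.Injective Φ ∧ ¬ Function.Surjective Φ := by
  obtain ⟨a₀, ha₀⟩ := not_forall.mp hII
  set f : Gsd α →* FreeGroup (Fin n') := rightHom.comp Φ
  have hf : f (tA α a₀) ≠ 1 := fun h => ha₀ ⟨_, eq_inl_of_right_eq_one h⟩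
  have hsq := IsFreeGroup.commute_map_sq_of_map_ne_one f hf fun g =>
    commute_of_right_eq_one (by simp [tA]) (by simp [tA])
  obtain ⟨a, b, hab⟩ := (Fin.nontrivial_iff_two_le.mpr hn).exists_pair_ne
  obtain ⟨a', b', hab'⟩ := (Fin.nontrivial_iff_two_le.mpr hn').exists_pair_ne
  refine ⟨fun hinj => not_injective_of_commute_sq hab (Φ.comp inr) (fun x y => hsq _ _)
    (hinj.comp inr_injective), fun hsurj => ?_⟩
  obtain ⟨x, hx⟩ := hsurj (inr (.of a'))
  obtain ⟨y, hy⟩ := hsurj (inr (.of b'))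
  exact FreeGroup.not_commute_sq_of_ne hab' (by simpa [f, hx, hy] using hsq x y)

/-- Type II homomorphisms are neither injective nor surjective. -/
theorem typeII_not_inj_not_surj {n m n' m' : ℕ} (hn : 2 ≤ n) (hm : 1 ≤ m)
    (hn' : 2 ≤ n') (hm' : 1 ≤ m')
    (α : FreeGroup (Fin n) →* Matrix.GeneralLinearGroup (Fin m) ℤ)
    (β : FreeGroup (Fin n') →* Matrix.GeneralLinearGroup (Fin m') ℤ)
    (Φ : Gsd α →* Gsd β)
    (hII : ¬ ∀ a : Fin m → ℤ, ∃ b : Fin m' → ℤ, Φ (tA α a) = tA β b) :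
    ¬ Function.Injective Φ ∧ ¬ Function.Surjective Φ :=
  typeII_not_inj_not_surj_general hn hn' α β Φ hII
end

section
/- A group homomorphism Φ : G_α → G_β is injective if and only if Φ is of type I (Φ(ℤ^m) ⊆ ℤ^{m'}) and both the restriction Φ|_{ℤ^m} : ℤ^m → ℤ^{m'} and the homomorphism π'∘Φ|_{F_n} : F_n → F_{n'} are injective. -/
open Matrix SemidirectProduct

/-!
If `Φ` is injective, the kernel of `π' ∘ Φ|_{F_n}` is a normal subgroup of `F_n` with commuting
elements (it embeds into `ℤ^{m'}`), and `π'(Φ(ℤ^m))` is a subgroup of `F_{n'}` with commuting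
elements normalized by `π'(Φ(G_α))`, which contains a copy of `F_n`. In a free group, any two
elements normalizing a nontrivial such subgroup commute: the centralizer of an element `w ≠ 1`
of it is infinite cyclic, `⟨z⟩` say, an element `q` of the normalizer conjugates `z` to `z^{±1}`,
so `q²` centralizes `z`, and commutation is transitive on nontrivial elements. As `F_n` is not
commutative, both subgroups are trivial. The converse is a computation with the normal form
`tᵃ u`.
-/

open Function

theorem commute_sq_of_conj_mem_zpowers {G : Type*} [Group G] [IsMulTorsionFree G] {z q : G}
    (hz : z ≠ 1) (h₁ : q * z * q⁻¹ ∈ Subgroup.zpowers z)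
    (h₂ : q⁻¹ * z * q ∈ Subgroup.zpowers z) : Commute (q ^ 2) z := by
  obtain ⟨j, hj⟩ := Subgroup.mem_zpowers_iff.1 h₁
  obtain ⟨i, hi⟩ := Subgroup.mem_zpowers_iff.1 h₂
  have hij : i * j = 1 := by
    refine (injective_zpow_iff_not_isOfFinOrder (x := z)).2
      (by rwa [isOfFinOrder_iff_eq_one]) ?_
    calc z ^ (i * j) = (q⁻¹ * z * q⁻¹⁻¹) ^ j := by rw [_root_.zpow_mul, hi, inv_inv]
      _ = q⁻¹ * (q * z * q⁻¹) * q := by rw [conj_zpow, hj, inv_inv]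
      _ = z ^ (1 : ℤ) := by group
  have : q ^ 2 * z * (q ^ 2)⁻¹ = z := calc
    q ^ 2 * z * (q ^ 2)⁻¹ = q * (q * z * q⁻¹) * q⁻¹ := by
      simp only [sq, _root_.mul_inv_rev, mul_assoc]
    _ = (z ^ j) ^ j := by rw [← hj, ← conj_zpow, ← hj]
    _ = z := by rcases Int.eq_one_or_neg_one_of_mul_eq_one' hij with ⟨-, rfl⟩ | ⟨-, rfl⟩ <;> simp
  exact mul_inv_eq_iff_eq_mul.1 this

namespace FreeGroup

variable {α : Type*}

section Words

variable [DecidableEq α]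

theorem toWord_mk_singleton_mul {x : α × Bool} {c : FreeGroup α}
    (h : c.toWord.head? ≠ some (x.1, !x.2)) : (mk [x] * c).toWord = x :: c.toWord := by
  have hred : IsReduced (x :: c.toWord) := by
    rcases hc : c.toWord with _ | ⟨y, L⟩
    · exact IsReduced.singleton
    · refine List.isChain_cons_cons.2 ⟨fun h1 => ?_, hc ▸ isReduced_toWord⟩
      rw [hc] at h
      obtain ⟨b, t⟩ := x
      obtain ⟨b', t'⟩ := y
      cases t <;> cases t' <;> simp_all
  rw [← mk_toWord (x := c), mul_mk, toWord_mk, List.singleton_append, hred.reduce_eq, mk_toWord]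

theorem exists_eq_mk_singleton_mul {c : FreeGroup α} {x : α × Bool} {L : List (α × Bool)}
    (h : c.toWord = x :: L) : ∃ d, c = mk [x] * d ∧ norm d < norm c := by
  have hL : IsReduced L :=
    (h ▸ isReduced_toWord : IsReduced (x :: L)).infix (List.suffix_cons x L).isInfix
  refine ⟨mk L, ?_, ?_⟩
  · rw [mul_mk, List.singleton_append, ← h, mk_toWord]
  · simp [norm, toWord_mk, hL.reduce_eq, h]

end Words

theorem mk_singleton_mem_zpowers (a : α) (t : Bool) : mk [(a, t)] ∈ Subgroup.zpowers (of a) := by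
  cases t
  · exact ⟨-1, by simp [of, inv_mk, invRev]⟩
  · exact Subgroup.mem_zpowers _

theorem mem_zpowers_of_commute_of {a : α} {c : FreeGroup α} (h : Commute c (of a)) :
    c ∈ Subgroup.zpowers (of a) := by
  classical
  induction hn : norm c using Nat.strong_induction_on generalizing c with
  | _ n ih =>
  subst hn
  have strip : ∀ c' : FreeGroup α, norm c' = norm c → Commute c' (of a) →
      ∀ {t L}, c'.toWord = (a, t) :: L → c' ∈ Subgroup.zpowers (of a) := by
    intro c' hc' hcom t L hw
    obtain ⟨d, rfl, hd⟩ := exists_eq_mk_singleton_mul hw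
    have hx := mk_singleton_mem_zpowers a t
    obtain ⟨k, hk⟩ := Subgroup.mem_zpowers_iff.1 hx
    have hxcom : Commute (mk [(a, t)]) (of a) := hk ▸ (Commute.refl (of a)).zpow_left k
    have hdcom := hxcom.inv_left.mul_left hcom
    rw [inv_mul_cancel_left] at hdcom
    exact mul_mem hx (ih _ (hc' ▸ hd) hdcom rfl)
  rcases hw : c.toWord with _ | ⟨⟨b, t⟩, L⟩
  · exact toWord_eq_nil_iff.1 hw ▸ one_mem _
  rcases hw' : c⁻¹.toWord with _ | ⟨⟨b', t'⟩, L'⟩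
  · exact inv_mem_iff.1 (toWord_eq_nil_iff.1 hw' ▸ one_mem _)
  obtain rfl | hb := eq_or_ne b a
  · exact strip c rfl h hw
  obtain rfl | hb' := eq_or_ne b' a
  · exact inv_mem_iff.1 (strip c⁻¹ norm_inv_eq h.inv_left hw')
  exfalso
  -- neither `c` nor `c⁻¹` begins with `a^{±1}`, so `a c` is reduced as written, while the reduced
  -- word of `(c a)⁻¹ = a⁻¹ c⁻¹` shows that `c a` ends in `a`: these two words cannot agree
  have h1 : (mk [(a, true)] * c).toWord = (a, true) :: c.toWord :=
    toWord_mk_singleton_mul (by simp [hw, hb])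
  have h2 : (mk [(a, false)] * c⁻¹).toWord = (a, false) :: c⁻¹.toWord :=
    toWord_mk_singleton_mul (by simp [hw', hb'])
  have h3 : mk [(a, false)] * c⁻¹ = (mk [(a, true)] * c)⁻¹ := by
    rw [show mk [(a, true)] = of a from rfl, ← h.eq, _root_.mul_inv_rev, of, inv_mk]
    rfl
  rw [h3, toWord_inv, h1, invRev_cons, ← toWord_inv, hw'] at h2
  simp [invRev] at h2
  exact hb' h2.1.1

theorem eq_of_commute_of_of {a b : α} {c : FreeGroup α} (hc : c ≠ 1) (ha : Commute c (of a))
    (hb : Commute c (of b)) : a = b := by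
  classical
  by_contra hab
  obtain ⟨k, rfl⟩ := Subgroup.mem_zpowers_iff.1 (mem_zpowers_of_commute_of ha)
  obtain ⟨l, hl⟩ := Subgroup.mem_zpowers_iff.1 (mem_zpowers_of_commute_of hb)
  let f : FreeGroup α →* Multiplicative ℤ :=
    FreeGroup.lift fun x => if x = a then Multiplicative.ofAdd 1 else 1
  have hk : Multiplicative.ofAdd k = 1 := by
    simpa [f, Ne.symm hab, ← ofAdd_zsmul] using (congrArg f hl).symm
  simp_all

theorem not_commute_of_of {a b : α} (hab : a ≠ b) : ¬Commute (of a) (of b) :=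
  fun h => hab (eq_of_commute_of_of (of_ne_one a) (Commute.refl _) h)

instance isCyclic_of_subsingleton [Subsingleton α] : IsCyclic (FreeGroup α) := by
  obtain ⟨g, hg⟩ : ∃ g : FreeGroup α, Set.range of ⊆ {g} := by
    rcases isEmpty_or_nonempty α with hα | ⟨⟨s⟩⟩
    · exact ⟨1, by simp [Set.range_eq_empty]⟩
    · exact ⟨of s, by rintro _ ⟨t, rfl⟩; rw [Subsingleton.elim t s]; rfl⟩
  refine isCyclic_iff_exists_zpowers_eq_top.2 ⟨g, top_unique ?_⟩
  rw [← closure_range_of, Subgroup.zpowers_eq_closure]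
  exact Subgroup.closure_mono hg

theorem _root_.IsFreeGroup.isCyclic_of_commute_of_ne_one {G : Type*} [Group G] [IsFreeGroup G]
    {c : G} (hc : c ≠ 1) (h : ∀ g, Commute c g) : IsCyclic G := by
  let e := IsFreeGroup.mulEquiv G
  have hc' : e.symm c ≠ 1 := by simpa using hc
  have : Subsingleton (IsFreeGroup.Generators G) := ⟨fun s t =>
    FreeGroup.eq_of_commute_of_of hc' (by simpa using (h (e (.of s))).map e.symm)
      (by simpa using (h (e (.of t))).map e.symm)⟩
  exact isCyclic_of_surjective e e.surjective

theorem commute_trans {a x y : FreeGroup α} (hxa : Commute x a) (hay : Commute a y)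
    (ha : a ≠ 1) : Commute x y := by
  let K := Subgroup.closure {x, a, y}
  have hK : K ≤ Subgroup.centralizer {a} := by
    refine (Subgroup.closure_le _).2 ?_
    rintro g (rfl | rfl | rfl) <;> rw [SetLike.mem_coe, Subgroup.mem_centralizer_singleton_iff]
    exacts [hxa.eq, hay.eq.symm]
  have : IsCyclic K :=
    IsFreeGroup.isCyclic_of_commute_of_ne_one (c := ⟨a, Subgroup.subset_closure (by simp)⟩)
      (by simpa using ha) fun g =>
        Subtype.ext (Subgroup.mem_centralizer_singleton_iff.1 (hK g.2)).symm
  exact congrArg Subtype.val <| IsCyclic.commGroup.mul_comm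
    (⟨x, Subgroup.subset_closure (by simp)⟩ : K) ⟨y, Subgroup.subset_closure (by simp)⟩

theorem isCyclic_centralizer {w : FreeGroup α} (hw : w ≠ 1) :
    IsCyclic (Subgroup.centralizer {w}) :=
  IsFreeGroup.isCyclic_of_commute_of_ne_one
    (c := ⟨w, Subgroup.mem_centralizer_singleton_iff.2 rfl⟩) (by simpa using hw)
    fun g => Subtype.ext (Subgroup.mem_centralizer_singleton_iff.1 g.2).symm

theorem commute_of_commute_pow {g h : FreeGroup α} {n : ℕ} (hn : n ≠ 0)
    (hgh : Commute (g ^ n) (h ^ n)) : Commute g h := by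
  obtain rfl | hg := eq_or_ne g 1
  · exact Commute.one_left h
  obtain rfl | hh := eq_or_ne h 1
  · exact Commute.one_right g
  have hg' : Commute g (h ^ n) :=
    commute_trans (Commute.self_pow g n) hgh (mt (pow_eq_one_iff_left hn).1 hg)
  exact commute_trans hg' (Commute.pow_self h n) (mt (pow_eq_one_iff_left hn).1 hh)

theorem commute_of_mem_normalizer {N : Subgroup (FreeGroup α)} (hN : N ≠ ⊥)
    (hcomm : ∀ x ∈ N, ∀ y ∈ N, Commute x y) {g h : FreeGroup α}
    (hg : g ∈ Subgroup.normalizer (N : Set (FreeGroup α)))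
    (hh : h ∈ Subgroup.normalizer (N : Set (FreeGroup α))) : Commute g h := by
  obtain ⟨⟨w, hwN⟩, hw⟩ := Subgroup.ne_bot_iff_exists_ne_one.1 hN
  replace hw : w ≠ 1 := by simpa using hw
  obtain ⟨⟨z, hzw⟩, hz⟩ := (isCyclic_centralizer hw).exists_generator
  have hgen : ∀ c, Commute w c → c ∈ Subgroup.zpowers z := fun c hc => by
    obtain ⟨k, hk⟩ := hz ⟨c, Subgroup.mem_centralizer_singleton_iff.2 hc.eq.symm⟩
    exact ⟨k, congrArg Subtype.val hk⟩
  have hz1 : z ≠ 1 := by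
    rintro rfl
    simpa [hw] using hgen w (Commute.refl w)
  have hconj : ∀ q ∈ Subgroup.normalizer (N : Set (FreeGroup α)),
      q * z * q⁻¹ ∈ Subgroup.zpowers z := by
    intro q hq
    have hqw : q * w * q⁻¹ ∈ N := (Subgroup.mem_normalizer_iff.1 hq w).1 hwN
    have hzw' : Commute (q * w * q⁻¹) (q * z * q⁻¹) := by
      have : Commute w z := (Subgroup.mem_centralizer_singleton_iff.1 hzw).symm
      simpa using this.map (MulAut.conj q)
    exact hgen _ (commute_trans (hcomm w hwN _ hqw) hzw' (by simpa using hw))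
  have hsq : ∀ q ∈ Subgroup.normalizer (N : Set (FreeGroup α)), Commute (q ^ 2) z :=
    fun q hq => commute_sq_of_conj_mem_zpowers hz1 (hconj q hq)
      (by simpa using hconj q⁻¹ (inv_mem hq))
  exact commute_of_commute_pow two_ne_zero (commute_trans (hsq g hg) (hsq h hh).symm hz1)

end FreeGroup

namespace SemidirectProduct

section

variable {N G N' G' : Type*} [Group N] [Group G] [Group N'] [Group G']
  {φ : G →* MulAut N} {φ' : G' →* MulAut N'}

theorem injective_of_rightHom_map_inl {Φ : N ⋊[φ] G →* N' ⋊[φ'] G'}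
    (hI : ∀ x, rightHom (Φ (inl x)) = 1) (hN : Injective (Φ.comp inl))
    (hG : Injective (rightHom.comp (Φ.comp inr))) : Injective Φ := by
  refine (injective_iff_map_eq_one Φ).2 fun g hg => ?_
  rw [← inl_left_mul_inr_right g, map_mul] at hg
  have hr : g.right = 1 := hG <| by
    simpa only [MonoidHom.comp_apply, map_mul, hI, one_mul, map_one] using congrArg rightHom hg
  have hl : g.left = 1 := hN <| by
    simpa only [MonoidHom.comp_apply, hr, map_one, mul_one] using hg
  rw [← inl_left_mul_inr_right g, hl, hr, map_one, map_one, one_mul]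

theorem mem_range_inl_of_rightHom_eq_one {g : N ⋊[φ] G} (h : rightHom g = 1) :
    g ∈ (inl : N →* N ⋊[φ] G).range := by
  rwa [range_inl_eq_ker_rightHom]

end

section

variable {N N' α β : Type*} [CommGroup N] [CommGroup N']
  {φ : FreeGroup α →* MulAut N} {φ' : FreeGroup β →* MulAut N'}
  {Φ : N ⋊[φ] FreeGroup α →* N' ⋊[φ'] FreeGroup β}

theorem injective_rightHom_comp_inr {a b : α} (hab : a ≠ b) (hΦ : Injective Φ) :
    Injective (rightHom.comp (Φ.comp inr)) := by
  set θ := rightHom.comp (Φ.comp (inr : FreeGroup α →* N ⋊[φ] FreeGroup α))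
  have hcomm : ∀ u ∈ θ.ker, ∀ v ∈ θ.ker, Commute u v := by
    intro u hu v hv
    obtain ⟨x, hx⟩ := mem_range_inl_of_rightHom_eq_one (g := Φ (inr u)) hu
    obtain ⟨y, hy⟩ := mem_range_inl_of_rightHom_eq_one (g := Φ (inr v)) hv
    have : Commute (Φ (inr u)) (Φ (inr v)) := by
      simpa only [← hx, ← hy] using (Commute.all x y).map (inl (φ := φ'))
    exact inr_injective (hΦ (by simpa only [map_mul] using this.eq))
  rw [← MonoidHom.ker_eq_bot_iff]
  by_contra hker
  exact FreeGroup.not_commute_of_of hab (FreeGroup.commute_of_mem_normalizer hker hcomm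
    (by simp [Subgroup.normalizer_eq_top]) (by simp [Subgroup.normalizer_eq_top]))

theorem rightHom_map_inl_eq_one {a b : α} (hab : a ≠ b) (hΦ : Injective Φ) (x : N) :
    rightHom (Φ (inl x)) = 1 := by
  set ψ := rightHom.comp Φ
  set M := (inl : N →* N ⋊[φ] FreeGroup α).range.map ψ
  have hcomm : ∀ u ∈ M, ∀ v ∈ M, Commute u v := by
    rintro _ ⟨_, ⟨x, rfl⟩, rfl⟩ _ ⟨_, ⟨y, rfl⟩, rfl⟩
    exact ((Commute.all x y).map inl).map ψ
  have hnorm : ψ.range ≤ Subgroup.normalizer (M : Set (FreeGroup β)) := by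
    have : (inl : N →* N ⋊[φ] FreeGroup α).range.Normal :=
      range_inl_eq_ker_rightHom (φ := φ) ▸ inferInstance
    simpa only [Subgroup.normalizer_eq_top, ← MonoidHom.range_eq_map] using
      Subgroup.le_normalizer_map (H := (inl : N →* N ⋊[φ] FreeGroup α).range) ψ
  by_contra hx
  have hM : M ≠ ⊥ := fun h => by
    have hmem : ψ (inl x) ∈ M := ⟨inl x, ⟨x, rfl⟩, rfl⟩
    rw [h, Subgroup.mem_bot] at hmem
    exact hx hmem
  have hθ := injective_rightHom_comp_inr hab hΦ
  have hc := FreeGroup.commute_of_mem_normalizer hM hcomm (hnorm ⟨inr (.of a), rfl⟩)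
    (hnorm ⟨inr (.of b), rfl⟩)
  exact FreeGroup.not_commute_of_of hab (hθ (by rw [map_mul, map_mul]; exact hc.eq))

end

end SemidirectProduct

theorem injective_iff_general {n m n' m' : ℕ} (hn : 2 ≤ n)
    (α : FreeGroup (Fin n) →* Matrix.GeneralLinearGroup (Fin m) ℤ)
    (β : FreeGroup (Fin n') →* Matrix.GeneralLinearGroup (Fin m') ℤ)
    (Φ : Gsd α →* Gsd β) :
    Function.Injective Φ ↔
      ((∀ a : Fin m → ℤ, ∃ b : Fin m' → ℤ, Φ (tA α a) = tA β b) ∧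
        Function.Injective (fun a : Fin m → ℤ => Φ (tA α a)) ∧
        Function.Injective
          (fun u : FreeGroup (Fin n) => SemidirectProduct.rightHom (Φ (fE α u)))) := by
  have hne : (⟨0, by omega⟩ : Fin n) ≠ ⟨1, by omega⟩ := by simp
  constructor
  · intro hΦ
    refine ⟨fun a => ?_, fun a b h => ?_, injective_rightHom_comp_inr hne hΦ⟩
    · obtain ⟨x, hx⟩ := mem_range_inl_of_rightHom_eq_one
        (rightHom_map_inl_eq_one hne hΦ (Multiplicative.ofAdd a))
      exact ⟨x.toAdd, hx.symm⟩
    · exact Multiplicative.ofAdd.injective (inl_injective (hΦ h))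
  · rintro ⟨hI, hN, hG⟩
    refine injective_of_rightHom_map_inl (fun x => ?_) (fun x y h => ?_) hG
    · obtain ⟨b, hb⟩ := hI x.toAdd
      exact (congrArg rightHom hb).trans (rightHom_inl _)
    · exact Multiplicative.toAdd.injective (hN h)

/-- `Φ : G_α → G_β` is injective iff it is of type I with both `Φ|_{ℤ^m}` and
`π'∘Φ|_{F_n}` injective. -/
theorem injective_iff {n m n' m' : ℕ} (hn : 2 ≤ n) (hm : 1 ≤ m)
    (hn' : 2 ≤ n') (hm' : 1 ≤ m')
    (α : FreeGroup (Fin n) →* Matrix.GeneralLinearGroup (Fin m) ℤ)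
    (β : FreeGroup (Fin n') →* Matrix.GeneralLinearGroup (Fin m') ℤ)
    (Φ : Gsd α →* Gsd β) :
    Function.Injective Φ ↔
      ((∀ a : Fin m → ℤ, ∃ b : Fin m' → ℤ, Φ (tA α a) = tA β b) ∧
        Function.Injective (fun a : Fin m → ℤ => Φ (tA α a)) ∧
        Function.Injective
          (fun u : FreeGroup (Fin n) => SemidirectProduct.rightHom (Φ (fE α u)))) :=
  injective_iff_general hn α β Φ
end

section
/- For an endomorphism Φ of G_α, the following are equivalent: (i) Φ is bijective (an automorphism of G_α); (ii) Φ is surjective; (iii) Φ is of type I (Φ(ℤ^m) ⊆ ℤ^m) and both the restriction Φ|_{ℤ^m} : ℤ^m → ℤ^m and the homomorphism π∘Φ|_{F_n} : F_n → F_n are surjective. -/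
open Matrix SemidirectProduct

/-!
A surjective `Φ` is of type I: `π ∘ Φ` maps the normal abelian subgroup `ℤ^m` onto a normal
abelian subgroup of `F_n`, and for `n ≥ 2` there is none besides `1`. Indeed, an abelian subgroup
of a free group is cyclic (Nielsen–Schreier), all squares centralise a generator `w` of a normal
cyclic subgroup, and `a² w = w a²`, `b² w = w b²` for two basis elements `a, b` force `w = 1` by
counting exponent sums. A type I endomorphism induces endomorphisms of `ℤ^m` and of
`F_n = G_α / ℤ^m`, and by the short five lemma `Φ` is bijective as soon as both are. Both groups
are Hopfian, `ℤ^m` being Noetherian and `F_n` finitely generated and residually finite (a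
nontrivial word `x` moves `1` to `x` in the action of `F_n` on the suffixes of `x`, completed to
permutations), so for them surjective already means bijective.
-/

open Function Subgroup

def IsHopfian (G : Type*) [Group G] : Prop :=
  ∀ f : G →* G, Surjective f → Injective f

instance finite_monoidHom_of_fg {G H : Type*} [Group G] [Group H] [Group.FG G] [Finite H] :
    Finite (G →* H) := by
  obtain ⟨S, hS, π, hπ⟩ := Group.fg_iff_exists_freeGroup_hom_surjective.mp ‹_›
  have : Finite S := hS.to_subtype
  have : Finite (FreeGroup S →* H) := .of_equiv _ FreeGroup.lift
  exact .of_injective (fun f => f.comp π) fun _ _ h => (MonoidHom.cancel_right hπ).mp h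

theorem isHopfian_of_residuallyFinite (G : Type*) [Group G] [Group.FG G]
    [Group.ResiduallyFinite G] : IsHopfian G := by
  intro θ hθ
  refine (injective_iff_map_eq_one θ).mpr fun x hx => ?_
  by_contra hx1
  obtain ⟨K, hxK⟩ := Group.exists_finiteIndexNormalSubgroup_notMem x hx1
  -- precomposition with `θ` is injective on the finite set `Hom(G, G/K)`, hence surjective
  have hinj : Injective fun ψ : G →* G ⧸ K.toSubgroup => ψ.comp θ :=
    fun _ _ h => (MonoidHom.cancel_right hθ).mp h
  obtain ⟨ψ, hψ⟩ := Finite.injective_iff_surjective.mp hinj (QuotientGroup.mk' K.toSubgroup)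
  have := DFunLike.congr_fun hψ x
  simp only [MonoidHom.comp_apply, hx, map_one, QuotientGroup.mk'_apply] at this
  exact hxK ((QuotientGroup.eq_one_iff x).mp this.symm)

theorem exists_perm_eq_mul_left {G : Type*} [Group G] (P : Set G) [Finite P] (g : G) :
    ∃ σ : Equiv.Perm P, ∀ p : P, g * p ∈ P → (σ p : G) = g * p := by
  classical
  let e : {p : P // g * p ∈ P} ≃ {q : P // g⁻¹ * q ∈ P} :=
    { toFun := fun p => ⟨⟨g * p, p.2⟩, by simp⟩
      invFun := fun q => ⟨⟨g⁻¹ * q, q.2⟩, by simp⟩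
      left_inv := fun p => by simp
      right_inv := fun q => by simp }
  exact ⟨e.extendSubtype, fun p hp => by simp [Equiv.extendSubtype_apply_of_mem e p hp, e]⟩

theorem commute_sq_of_conj_mem_zpowers_s9 {G : Type*} [Group G] [IsMulTorsionFree G] {w : G}
    (h : ∀ g : G, g * w * g⁻¹ ∈ zpowers w) (g : G) : Commute (g ^ 2) w := by
  obtain ⟨k, hk⟩ := mem_zpowers_iff.mp (h g)
  obtain ⟨l, hl⟩ := mem_zpowers_iff.mp (h g⁻¹)
  have hw : w ^ (l * k) = w := by
    rw [_root_.zpow_mul, hl, conj_zpow, hk]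
    group
  rcases eq_or_ne w 1 with rfl | hw1
  · exact Commute.one_right _
  -- the conjugation action of `g` on `⟨w⟩` is `w ↦ w ^ k` with `k` a unit of `ℤ`
  have hlk : l * k = 1 := by
    rw [← sub_eq_zero, ← IsMulTorsionFree.zpow_eq_one_iff_right hw1, _root_.zpow_sub, hw,
      zpow_one, mul_inv_cancel]
  have hkk : k * k = 1 := by
    rcases Int.eq_one_or_neg_one_of_mul_eq_one' hlk with ⟨-, rfl⟩ | ⟨-, rfl⟩ <;> rfl
  refine mul_inv_eq_iff_eq_mul.mp ?_
  calc g ^ 2 * w * (g ^ 2)⁻¹ = g * (g * w * g⁻¹) * g⁻¹ := by simp only [sq]; group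
    _ = w ^ (k * k) := by rw [← hk, ← conj_zpow, ← hk, _root_.zpow_mul]
    _ = w := by rw [hkk, zpow_one]

namespace FreeGroup
variable {α : Type*}

theorem lift_mk_apply_one {P : Set (FreeGroup α)} (σ : α → Equiv.Perm P)
    (hσ : ∀ a (p : P), of a * (p : FreeGroup α) ∈ P → (σ a p : FreeGroup α) = of a * p)
    (h1 : 1 ∈ P) : ∀ L : List (α × Bool), (∀ M ∈ L.tails, mk M ∈ P) →
      (lift σ (mk L) ⟨1, h1⟩ : FreeGroup α) = mk L
  | [], _ => by simp [← one_eq_mk]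
  | (a, b) :: L, hL => by
    have hL' : ∀ M ∈ L.tails, mk M ∈ P := fun M hM => hL M (by simp [hM])
    have ih := lift_mk_apply_one σ hσ h1 L hL'
    have hmem : mk ((a, b) :: L) ∈ P := hL _ (by simp)
    cases b
    · rw [show mk ((a, false) :: L) = (of a)⁻¹ * mk L from rfl] at hmem ⊢
      have hback : σ a ⟨(of a)⁻¹ * mk L, hmem⟩ = lift σ (mk L) ⟨1, h1⟩ := by
        refine Subtype.ext ?_
        rw [hσ a _ (by simpa using hL' L (by simp)), ih, mul_inv_cancel_left]
      rw [_root_.map_mul, _root_.map_inv, lift_apply_of, Equiv.Perm.mul_apply, ← hback,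
        Equiv.Perm.inv_def, Equiv.symm_apply_apply]
    · rw [show mk ((a, true) :: L) = of a * mk L from rfl] at hmem ⊢
      rw [_root_.map_mul, lift_apply_of, Equiv.Perm.mul_apply, hσ a _ (by rwa [ih]), ih]

instance : Group.ResiduallyFinite (FreeGroup α) := by
  classical
  refine Group.residuallyFinite_of_forall_exists_finite_monoidHom fun x hx => ?_
  let P : Set (FreeGroup α) := mk '' {M | M ∈ x.toWord.tails}
  have : Finite P := ((List.finite_toSet _).image _).to_subtype
  have h1 : (1 : FreeGroup α) ∈ P := ⟨[], by simp, rfl⟩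
  choose σ hσ using fun a => exists_perm_eq_mul_left P (of a)
  refine ⟨Equiv.Perm P, inferInstance, inferInstance, lift σ, fun h => hx ?_⟩
  have := lift_mk_apply_one σ hσ h1 x.toWord fun M hM => ⟨M, hM, rfl⟩
  rwa [mk_toWord, h, Equiv.Perm.one_apply, eq_comm] at this

theorem not_commute_of_of_ne {s t : α} (hst : s ≠ t) : ¬Commute (of s) (of t) := by
  classical
  intro h
  have := congrArg (lift fun u => if u = s then Equiv.swap (0 : Fin 3) 1 else Equiv.swap 1 2) h
  simp [hst.symm] at this
  revert this
  decide

theorem isCyclic_of_subsingleton_s9 [Subsingleton α] : IsCyclic (FreeGroup α) := by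
  obtain ⟨g, hg⟩ : ∃ g : FreeGroup α, Set.range (of (α := α)) ⊆ {g} := by
    rcases isEmpty_or_nonempty α with hα | ⟨⟨s⟩⟩
    · exact ⟨1, by simp [Set.range_eq_empty]⟩
    · exact ⟨of s, by rintro _ ⟨t, rfl⟩; rw [Subsingleton.elim t s]; rfl⟩
  refine isCyclic_iff_exists_zpowers_eq_top.mpr ⟨g, top_le_iff.mp ?_⟩
  rw [← closure_range_of, zpowers_eq_closure]
  exact closure_mono hg

end FreeGroup

theorem IsFreeGroup.isCyclic_of_isMulCommutative_s9 (G : Type*) [Group G] [IsFreeGroup G]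
    [IsMulCommutative G] : IsCyclic G := by
  let e := IsFreeGroup.toFreeGroup G
  have : Subsingleton (IsFreeGroup.Generators G) := by
    refine ⟨fun s t => by_contra fun hst => FreeGroup.not_commute_of_of_ne hst ?_⟩
    have : Commute (e.symm (FreeGroup.of s)) (e.symm (FreeGroup.of t)) := mul_comm' _ _
    simpa using this.map e
  have := FreeGroup.isCyclic_of_subsingleton_s9 (α := IsFreeGroup.Generators G)
  exact isCyclic_of_surjective e.symm e.symm.surjective

theorem IsFreeGroup.exists_mem_zpowers_of_commute_s9 {G : Type*} [Group G] [IsFreeGroup G]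
    {x y : G} (h : Commute x y) : ∃ c : G, x ∈ zpowers c ∧ y ∈ zpowers c := by
  -- `closure {x, y}` is a free group by Nielsen–Schreier (`subgroupIsFreeOfIsFree`)
  let H := closure {x, y}
  have : IsMulCommutative H := isMulCommutative_closure <| by
    rintro a (rfl | rfl) b (rfl | rfl)
    exacts [rfl, h.eq, h.eq.symm, rfl]
  obtain ⟨c, hc⟩ := (H.isCyclic_iff_exists_zpowers_eq_top).mp
    (IsFreeGroup.isCyclic_of_isMulCommutative_s9 H)
  exact ⟨c, hc ▸ subset_closure (by simp), hc ▸ subset_closure (by simp)⟩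

namespace FreeGroup
variable {α : Type*}

theorem eq_one_of_commute_sq {i j : α} (hij : i ≠ j) {w : FreeGroup α}
    (hi : Commute (of i ^ 2) w) (hj : Commute (of j ^ 2) w) : w = 1 := by
  classical
  obtain ⟨c, hc, hwc⟩ := IsFreeGroup.exists_mem_zpowers_of_commute_s9 hi
  obtain ⟨d, hd, hwd⟩ := IsFreeGroup.exists_mem_zpowers_of_commute_s9 hj
  obtain ⟨p, hp⟩ := mem_zpowers_iff.mp hc
  obtain ⟨q, rfl⟩ := mem_zpowers_iff.mp hwc
  obtain ⟨r, hr⟩ := mem_zpowers_iff.mp hd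
  obtain ⟨s, hs⟩ := mem_zpowers_iff.mp hwd
  -- exponent sums in the generators `i` and `j`
  let χ (k : α) (g : FreeGroup α) : ℤ :=
    (lift (Pi.mulSingle k (Multiplicative.ofAdd 1)) g).toAdd
  have hχ : ∀ k g (n : ℤ), χ k (g ^ n) = n * χ k g := by simp [χ]
  have hχsq : ∀ k l, χ k (of l ^ 2) = if l = k then 2 else 0 := by
    intro k l; by_cases h : l = k <;> simp [χ, h]
  have h1 := congrArg (χ i) hp
  have h2 := congrArg (χ i) hr
  have h3 := congrArg (χ j) hr
  have h4 := congrArg (χ i) hs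
  simp only [hχ, hχsq, if_neg hij.symm] at h1 h2 h3 h4
  have hr0 : r ≠ 0 := by rintro rfl; simp at h3
  have hdi : χ i d = 0 := by simpa [hr0] using h2
  have hci : χ i c ≠ 0 := by rintro h; simp [h] at h1
  have hq : q = 0 := by simpa [hdi, hci] using h4.symm
  rw [hq, zpow_zero]

theorem eq_bot_of_normal_of_isMulCommutative [Nontrivial α] (N : Subgroup (FreeGroup α))
    [N.Normal] [IsMulCommutative N] : N = ⊥ := by
  obtain ⟨w, rfl⟩ := (N.isCyclic_iff_exists_zpowers_eq_top).mp
    (IsFreeGroup.isCyclic_of_isMulCommutative_s9 N)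
  obtain ⟨i, j, hij⟩ := exists_pair_ne α
  have hconj := commute_sq_of_conj_mem_zpowers_s9 fun g =>
    ‹(zpowers w).Normal›.conj_mem _ (mem_zpowers w) g
  rw [eq_one_of_commute_sq hij (hconj _) (hconj _), zpowers_one_eq_bot]

end FreeGroup

section ShortFiveLemma

variable {G G' Q Q' : Type*} [Group G] [Group G'] [Group Q] [Group Q']

theorem MonoidHom.injective_of_comp_eq {π : G →* Q} {π' : G' →* Q'} {Φ : G →* G'}
    {φ : Q →* Q'} (h : π'.comp Φ = φ.comp π) (hφ : Injective φ)
    (hK : ∀ g, π g = 1 → Φ g = 1 → g = 1) : Injective Φ := by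
  refine (injective_iff_map_eq_one Φ).mpr fun g hg => hK g (hφ ?_) hg
  rw [← MonoidHom.comp_apply, ← h, MonoidHom.comp_apply, hg, map_one, map_one]

theorem MonoidHom.surjective_of_comp_eq {π : G →* Q} {π' : G' →* Q'} {Φ : G →* G'}
    {φ : Q →* Q'} (h : π'.comp Φ = φ.comp π) (hπ : Surjective π) (hφ : Surjective φ)
    (hK : π'.ker ≤ Φ.range) : Surjective Φ := by
  intro g'
  obtain ⟨g, hg⟩ := (hφ.comp hπ) (π' g')
  have hker : g' * (Φ g)⁻¹ ∈ π'.ker := by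
    rw [MonoidHom.mem_ker, map_mul, map_inv, ← MonoidHom.comp_apply, h]
    exact mul_inv_eq_one.mpr hg.symm
  obtain ⟨k, hk⟩ := hK hker
  exact ⟨k * g, by rw [map_mul, hk, inv_mul_cancel_right]⟩

theorem MonoidHom.ker_le_map_ker_of_comp_eq {π : G →* Q} {π' : G' →* Q'} {Φ : G →* G'}
    {φ : Q →* Q'} (h : π'.comp Φ = φ.comp π) (hΦ : Surjective Φ) (hφ : Injective φ) :
    π'.ker ≤ π.ker.map Φ := by
  intro g' hg'
  obtain ⟨g, rfl⟩ := hΦ g'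
  refine ⟨g, hφ ?_, rfl⟩
  rw [← MonoidHom.comp_apply, ← h, MonoidHom.comp_apply, hg', map_one]

end ShortFiveLemma

namespace SemidirectProduct

variable {N H Q : Type*} [Group N] [Group H] [Group Q] {φ : H →* MulAut N}

theorem comp_inr_comp_rightHom {Ψ : N ⋊[φ] H →* Q} (h : Ψ.comp inl = 1) :
    (Ψ.comp inr).comp rightHom = Ψ :=
  hom_ext (by ext; simp [h]) (by ext; simp)

theorem comp_inl_eq_one_of_surjective [IsMulCommutative N]
    (hH : ∀ A : Subgroup H, A.Normal → IsMulCommutative A → A = ⊥) {Ψ : N ⋊[φ] H →* H}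
    (hΨ : Surjective Ψ) : Ψ.comp inl = 1 := by
  have hN : (inl : N →* N ⋊[φ] H).range.Normal := by
    rw [range_inl_eq_ker_rightHom]
    exact MonoidHom.normal_ker _
  have hA := hH _ (hN.map Ψ hΨ) (Subgroup.map_isMulCommutative _ _)
  ext n
  have := mem_map_of_mem Ψ (show inl n ∈ (inl : N →* N ⋊[φ] H).range from ⟨n, rfl⟩)
  rwa [hA, Subgroup.mem_bot] at this

end SemidirectProduct

section Gsd

variable {n m : ℕ} (α : FreeGroup (Fin n) →* Matrix.GeneralLinearGroup (Fin m) ℤ)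

theorem tau_tA (a : Fin m → ℤ) : tau α (tA α a) = a := by
  simp [tau, tA]

theorem tA_injective : Injective (tA α) :=
  inl_injective.comp Multiplicative.ofAdd.injective

theorem tA_add (a b : Fin m → ℤ) : tA α (a + b) = tA α a * tA α b :=
  map_mul inl (Multiplicative.ofAdd a) (Multiplicative.ofAdd b)

theorem tA_eq_one_iff {a : Fin m → ℤ} : tA α a = 1 ↔ a = 0 :=
  (map_eq_one_iff _ inl_injective).trans ofAdd_eq_one

theorem exists_tA_eq_of_rightHom_eq_one {g : Gsd α} (hg : rightHom g = 1) :
    ∃ a, tA α a = g := by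
  obtain ⟨l, hl⟩ : g ∈ (inl : FA m →* Gsd α).range := by
    rwa [range_inl_eq_ker_rightHom, MonoidHom.mem_ker]
  exact ⟨Multiplicative.toAdd l, hl⟩

def IsTypeI (Φ : Gsd α →* Gsd α) : Prop :=
  ∀ a : Fin m → ℤ, ∃ b : Fin m → ℤ, Φ (tA α a) = tA α b

variable {α} {Φ : Gsd α →* Gsd α}

namespace IsTypeI

theorem map_tA (hΦ : IsTypeI α Φ) (a : Fin m → ℤ) :
    Φ (tA α a) = tA α (tau α (Φ (tA α a))) := by
  obtain ⟨b, hb⟩ := hΦ a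
  rw [hb, tau_tA]

def restrict (hΦ : IsTypeI α Φ) : (Fin m → ℤ) →+ (Fin m → ℤ) :=
  AddMonoidHom.mk' (fun a => tau α (Φ (tA α a))) fun a b => tA_injective α <| by
    rw [← hΦ.map_tA, tA_add, map_mul, tA_add, ← hΦ.map_tA, ← hΦ.map_tA]

theorem rightHom_comp (hΦ : IsTypeI α Φ) :
    rightHom.comp Φ = (rightHom.comp (Φ.comp inr)).comp rightHom := by
  refine (comp_inr_comp_rightHom ?_).symm
  ext l
  obtain ⟨b, hb⟩ := hΦ (Multiplicative.toAdd l)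
  change rightHom (Φ (tA α (Multiplicative.toAdd l))) = 1
  rw [hb, tA, rightHom_inl]

theorem bijective (hΦ : IsTypeI α Φ) (hψ : Surjective hΦ.restrict)
    (hφ : Surjective (rightHom.comp (Φ.comp inr))) : Bijective Φ := by
  have hφinj := isHopfian_of_residuallyFinite (FreeGroup (Fin n)) _ hφ
  have hψinj := IsNoetherian.injective_of_surjective_endomorphism hΦ.restrict.toIntLinearMap hψ
  refine ⟨MonoidHom.injective_of_comp_eq hΦ.rightHom_comp hφinj fun g hg hΦg => ?_,
    MonoidHom.surjective_of_comp_eq hΦ.rightHom_comp rightHom_surjective hφ fun g hg => ?_⟩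
  · obtain ⟨a, rfl⟩ := exists_tA_eq_of_rightHom_eq_one α hg
    rw [hΦ.map_tA, tA_eq_one_iff] at hΦg
    rw [tA_eq_one_iff]
    exact (injective_iff_map_eq_zero _).mp hψinj a hΦg
  · obtain ⟨b, rfl⟩ := exists_tA_eq_of_rightHom_eq_one α hg
    obtain ⟨a, rfl⟩ := hψ b
    exact ⟨tA α a, hΦ.map_tA a⟩

theorem surjective_rightHom_comp_inr (hΦ : IsTypeI α Φ) (h : Surjective Φ) :
    Surjective (rightHom.comp (Φ.comp inr)) := by
  have hsurj : Surjective (rightHom.comp Φ) := rightHom_surjective.comp h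
  rw [hΦ.rightHom_comp, MonoidHom.coe_comp] at hsurj
  exact hsurj.of_comp

theorem surjective_restrict (hΦ : IsTypeI α Φ) (h : Surjective Φ) :
    Surjective hΦ.restrict := by
  intro b
  have hφinj := isHopfian_of_residuallyFinite (FreeGroup (Fin n)) _
    (hΦ.surjective_rightHom_comp_inr h)
  obtain ⟨g, hg, hgb⟩ := MonoidHom.ker_le_map_ker_of_comp_eq hΦ.rightHom_comp h hφinj
    (show tA α b ∈ rightHom.ker from rightHom_inl _)
  obtain ⟨a, rfl⟩ := exists_tA_eq_of_rightHom_eq_one α hg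
  exact ⟨a, tA_injective α ((hΦ.map_tA a).symm.trans hgb)⟩

end IsTypeI

theorem isTypeI_of_surjective (hn : 2 ≤ n) (h : Surjective Φ) : IsTypeI α Φ := by
  have : Nontrivial (Fin n) := Fin.nontrivial_iff_two_le.mpr hn
  have hI := comp_inl_eq_one_of_surjective
    (fun A _ _ => FreeGroup.eq_bot_of_normal_of_isMulCommutative A)
    (Ψ := rightHom.comp Φ) (rightHom_surjective.comp h)
  intro a
  obtain ⟨b, hb⟩ := exists_tA_eq_of_rightHom_eq_one α (DFunLike.congr_fun hI (.ofAdd a))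
  exact ⟨b, hb.symm⟩

end Gsd

theorem auto_tfae_general {n m : ℕ} (hn : 2 ≤ n)
    (α : FreeGroup (Fin n) →* Matrix.GeneralLinearGroup (Fin m) ℤ)
    (Φ : Gsd α →* Gsd α) :
    (Function.Bijective Φ ↔ Function.Surjective Φ) ∧
    (Function.Surjective Φ ↔
      ((∀ a : Fin m → ℤ, ∃ b : Fin m → ℤ, Φ (tA α a) = tA α b) ∧
        Function.Surjective (fun a : Fin m → ℤ => tau α (Φ (tA α a))) ∧
        Function.Surjective
          (fun u : FreeGroup (Fin n) => SemidirectProduct.rightHom (Φ (fE α u))))) := by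
  have of_surjective (h : Surjective Φ) : ∃ hI : IsTypeI α Φ, Surjective hI.restrict ∧
      Surjective (rightHom.comp (Φ.comp inr)) :=
    have hI := isTypeI_of_surjective hn h
    ⟨hI, hI.surjective_restrict h, hI.surjective_rightHom_comp_inr h⟩
  refine ⟨⟨Bijective.surjective, fun h => ?_⟩, fun h => ?_,
    fun ⟨hI, hψ, hφ⟩ => (IsTypeI.bijective hI hψ hφ).surjective⟩
  · obtain ⟨hI, hψ, hφ⟩ := of_surjective h
    exact hI.bijective hψ hφ
  · obtain ⟨hI, hψ, hφ⟩ := of_surjective h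
    exact ⟨hI, hψ, hφ⟩

/-- For an endomorphism `Φ` of `G_α`: bijective ↔ surjective ↔ (type I with both
`Φ|_{ℤ^m}` and `π∘Φ|_{F_n}` surjective). -/
theorem auto_tfae {n m : ℕ} (hn : 2 ≤ n) (hm : 1 ≤ m)
    (α : FreeGroup (Fin n) →* Matrix.GeneralLinearGroup (Fin m) ℤ)
    (Φ : Gsd α →* Gsd α) :
    (Function.Bijective Φ ↔ Function.Surjective Φ) ∧
    (Function.Surjective Φ ↔
      ((∀ a : Fin m → ℤ, ∃ b : Fin m → ℤ, Φ (tA α a) = tA α b) ∧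
        Function.Surjective (fun a : Fin m → ℤ => tau α (Φ (tA α a))) ∧
        Function.Surjective
          (fun u : FreeGroup (Fin n) => SemidirectProduct.rightHom (Φ (fE α u))))) :=
  auto_tfae_general hn α Φ
end
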